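/- Define φ(s,x,m) := −xm − m·log m + κ(s)·m for s ∈ [0,T], x ∈ ℝ, m > 0, where κ(s) = −∫_s^T (1/2)(μ(t)/σ(t))² dt with μ, σ continuous and σ nowhere zero. Define the second-order operator (with θ₀ = −μ(s)/σ(s) and w = μ(s)/σ(s)²): Aφ(s,x,m) = ∂_s φ + wμ(s)∂_x φ + (1/2)w²σ(s)²∂²_{xx}φ + (1/2)m²θ₀²∂²_{mm}φ + wθ₀mσ(s)∂²_{xm}φ. Then Aφ(s,x,m) = 0 for all (s,x,m) in the domain, and φ(T,x,m) = −xm − m log m. -/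

import Mathlib

/-! By the fundamental theorem of calculus κ' = ½(μ/σ)², and φ is affine in `x`, so the
generator at the controls θ₀ = -μ/σ, w = μ/σ² collapses to (½ - 1 - ½ + 1)(μ/σ)² m = 0;
the terminal condition is κ(T) = 0. -/

open Real

theorem hasDerivAt_neg_intervalIntegral_lower {E : Type*} [NormedAddCommGroup E]
    [NormedSpace ℝ E] [CompleteSpace E] {f : ℝ → E} (hf : Continuous f) (b a : ℝ) :
    HasDerivAt (fun u => -∫ t in u..b, f t) (f a) a := by
  simp only [intervalIntegral.integral_symm b, neg_neg]
  exact (hf.integral_hasStrictDerivAt b a).hasDerivAt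

section EntropicValue

variable (c x m : ℝ)

theorem hasDerivAt_entropicValue_x :
    HasDerivAt (fun x => -x * m - m * log m + c * m) (-m) x := by
  simpa using (((hasDerivAt_id x).neg.mul_const m).sub_const (m * log m)).add_const (c * m)

theorem deriv_entropicValue_x : deriv (fun x => -x * m - m * log m + c * m) x = -m :=
  (hasDerivAt_entropicValue_x c x m).deriv

theorem deriv_deriv_entropicValue_x :
    deriv (deriv fun x => -x * m - m * log m + c * m) x = 0 := by
  rw [show (deriv fun x => -x * m - m * log m + c * m) = fun _ => -m from
    funext (deriv_entropicValue_x c · m), deriv_const]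

theorem deriv_deriv_entropicValue_xm :
    deriv (fun m => deriv (fun x => -x * m - m * log m + c * m) x) m = -1 := by
  simp only [deriv_entropicValue_x, deriv_neg']

variable {m}

theorem hasDerivAt_entropicValue_m (hm : m ≠ 0) :
    HasDerivAt (fun m => -x * m - m * log m + c * m) (-x - 1 - log m + c) m :=
  ((((hasDerivAt_id' m).const_mul (-x)).sub (hasDerivAt_mul_log hm)).add
    ((hasDerivAt_id' m).const_mul c)).congr_deriv (by ring)

theorem deriv_deriv_entropicValue_m (hm : 0 < m) :
    deriv (deriv fun m => -x * m - m * log m + c * m) m = -1 / m := by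
  have hderiv : deriv (fun m => -x * m - m * log m + c * m)
      =ᶠ[nhds m] fun m => -x - 1 - log m + c := by
    filter_upwards [lt_mem_nhds hm] with m' hm'
    exact (hasDerivAt_entropicValue_m c x hm'.ne').deriv
  rw [hderiv.deriv_eq, (((hasDerivAt_log hm.ne').const_sub (-x - 1)).add_const c).deriv]
  ring

end EntropicValue

theorem hasDerivAt_entropicValue_s {κ : ℝ → ℝ} {κ' s : ℝ} (hκ : HasDerivAt κ κ' s) (x m : ℝ) :
    HasDerivAt (fun s => -x * m - m * log m + κ s * m) (κ' * m) s := by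
  simpa using (hκ.mul_const m).const_add (-x * m - m * log m)

theorem hjbi_generator_entropic_eq_zero (μ σ m : ℝ) (hσ : σ ≠ 0) :
    (1 / 2) * (μ / σ) ^ 2 * m + (μ / σ ^ 2) * μ * -m + (1 / 2) * (μ / σ ^ 2) ^ 2 * σ ^ 2 * 0
      + (1 / 2) * m ^ 2 * (-μ / σ) ^ 2 * (-1 / m) + (μ / σ ^ 2) * (-μ / σ) * m * σ * -1 = 0 := by
  field_simp
  ring

theorem hjbi_verification_entropic_general (T : ℝ) (μ σ : ℝ → ℝ)
    (hμ : Continuous μ) (hσ : Continuous σ) (hσ0 : ∀ s, σ s ≠ 0)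
    (κ : ℝ → ℝ) (hκ : ∀ s, κ s = -(∫ t in s..T, (1 / 2) * (μ t / σ t) ^ 2))
    (φ : ℝ → ℝ → ℝ → ℝ)
    (hφ : ∀ s x m, φ s x m = -x * m - m * Real.log m + κ s * m) :
    ∀ s ∈ Set.Icc (0 : ℝ) T, ∀ x : ℝ, ∀ m : ℝ, 0 < m →
      (deriv (fun s' => φ s' x m) s
        + (μ s / σ s ^ 2) * μ s * deriv (fun x' => φ s x' m) x
        + (1 / 2) * (μ s / σ s ^ 2) ^ 2 * σ s ^ 2
            * deriv (deriv (fun x' => φ s x' m)) x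
        + (1 / 2) * m ^ 2 * (-μ s / σ s) ^ 2
            * deriv (deriv (fun m' => φ s x m')) m
        + (μ s / σ s ^ 2) * (-μ s / σ s) * m * σ s
            * deriv (fun m' => deriv (fun x' => φ s x' m') x) m = 0) ∧
      φ T x m = -x * m - m * Real.log m := by
  intro s _ x m hm
  obtain rfl : φ = fun s x m => -x * m - m * log m + κ s * m :=
    funext fun s => funext fun x => funext (hφ s x)
  have hκ' : HasDerivAt κ ((1 / 2) * (μ s / σ s) ^ 2) s := by
    rw [funext hκ]
    exact hasDerivAt_neg_intervalIntegral_lower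
      (continuous_const.mul ((hμ.div hσ hσ0).pow 2)) T s
  refine ⟨?_, by simp [hκ]⟩
  beta_reduce
  rw [(hasDerivAt_entropicValue_s hκ' x m).deriv, deriv_entropicValue_x,
    deriv_deriv_entropicValue_x, deriv_deriv_entropicValue_m _ _ hm,
    deriv_deriv_entropicValue_xm]
  exact hjbi_generator_entropic_eq_zero (μ s) (σ s) m (hσ0 s)

/-- The candidate value function φ(s,x,m) = −xm − m log m + κ(s)m, with
κ(s) = −∫_s^T (1/2)(μ/σ)² dt, solves the HJBI equation at the optimal controls
θ̂₀(s) = −μ(s)/σ(s), ŵ(s) = μ(s)/σ(s)², and satisfies the terminal condition. -/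
theorem hjbi_verification_entropic (T : ℝ) (hT : 0 < T) (μ σ : ℝ → ℝ)
    (hμ : Continuous μ) (hσ : Continuous σ) (hσ0 : ∀ s, σ s ≠ 0)
    (κ : ℝ → ℝ) (hκ : ∀ s, κ s = -(∫ t in s..T, (1 / 2) * (μ t / σ t) ^ 2))
    (φ : ℝ → ℝ → ℝ → ℝ)
    (hφ : ∀ s x m, φ s x m = -x * m - m * Real.log m + κ s * m) :
    ∀ s ∈ Set.Icc (0 : ℝ) T, ∀ x : ℝ, ∀ m : ℝ, 0 < m →
      (deriv (fun s' => φ s' x m) s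
        + (μ s / σ s ^ 2) * μ s * deriv (fun x' => φ s x' m) x
        + (1 / 2) * (μ s / σ s ^ 2) ^ 2 * σ s ^ 2
            * deriv (deriv (fun x' => φ s x' m)) x
        + (1 / 2) * m ^ 2 * (-μ s / σ s) ^ 2
            * deriv (deriv (fun m' => φ s x m')) m
        + (μ s / σ s ^ 2) * (-μ s / σ s) * m * σ s
            * deriv (fun m' => deriv (fun x' => φ s x' m') x) m = 0) ∧
      φ T x m = -x * m - m * Real.log m :=
  hjbi_verification_entropic_general T μ σ hμ hσ hσ0 κ hκ φ hφ
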